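/- arXiv:math/0601592 — 3 statements merged into one kernel-verified Lean document; each statement's English description precedes it below -/
import Mathlib

section
/- For every k ≥ 3, the orbital Schreier graph Γ = Γ_{000…} of the Hanoi Towers group H(k) has subexponential growth: lim_{n→∞} γ(n)^{1/n} = 1. -/
/-- The generator `a_{(ij)}` of the Hanoi Towers group, acting on finite words:
`a_{(ij)}(iw) = jw`, `a_{(ij)}(jw) = iw`, `a_{(ij)}(xw) = x · a_{(ij)}(w)` for `x ∉ {i,j}`,
and `a_{(ij)}(ε) = ε`. -/
def hMove {k : ℕ} (i j : Fin k) : List (Fin k) → List (Fin k)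
  | [] => []
  | x :: w => if x = i then j :: w else if x = j then i :: w else x :: hMove i j w

theorem hMove_involutive {k : ℕ} (i j : Fin k) : ∀ l, hMove i j (hMove i j l) = l := by
  intro l
  induction l with
  | nil => rfl
  | cons x w ih =>
    by_cases hxi : x = i
    · by_cases hij : j = i <;> simp [hMove, hxi, hij]
    · by_cases hxj : x = j
      · by_cases hij : j = i <;> simp [hMove, hxi, hxj, hij]
      · simp [hMove, hxi, hxj, ih]

/-- The generator `a_{(ij)}` as a permutation of the set of finite words. -/
def hGen {k : ℕ} (i j : Fin k) : Equiv.Perm (List (Fin k)) :=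
  ⟨hMove i j, hMove i j, hMove_involutive i j, hMove_involutive i j⟩

/-- The Hanoi Towers group `H(k)`, the subgroup of the permutation group of the set of
finite words over `{0, …, k-1}` generated by the `a_{(ij)}` for `i < j`. -/
def HanoiGroup (k : ℕ) : Subgroup (Equiv.Perm (List (Fin k))) :=
  Subgroup.closure {g | ∃ i j : Fin k, i < j ∧ g = hGen i j}

theorem hMove_length {k : ℕ} (i j : Fin k) (l : List (Fin k)) :
    (hMove i j l).length = l.length := by
  induction l with
  | nil => rfl
  | cons x w ih =>
    by_cases hxi : x = i
    · by_cases hij : j = i <;> simp [hMove, hxi, hij]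
    · by_cases hxj : x = j
      · by_cases hij : j = i <;> simp [hMove, hxi, hxj, hij]
      · simp [hMove, hxi, hxj, ih]

open Classical in
/-- The action of the generator `a_{(ij)}` on infinite words: it swaps `i` and `j` at the
first position whose letter lies in `{i,j}` and leaves all other letters fixed (if no
letter lies in `{i,j}`, the word is fixed). -/
noncomputable def hMoveInf {k : ℕ} (i j : Fin k) (s : ℕ → Fin k) : ℕ → Fin k :=
  fun m =>
    if (s m = i ∨ s m = j) ∧ ∀ l < m, s l ≠ i ∧ s l ≠ j then Equiv.swap i j (s m) else s m

/-- The orbital Schreier graph structure on infinite words: `s` and `t` are adjacent iff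
`s ≠ t` and some generator `a_{(ij)}` (with `i < j`) maps one to the other. -/
noncomputable def infGraph (k : ℕ) : SimpleGraph (ℕ → Fin k) where
  Adj s t := s ≠ t ∧ ∃ i j : Fin k, i < j ∧ (hMoveInf i j s = t ∨ hMoveInf i j t = s)
  symm := ⟨by
    rintro s t ⟨hst, i, j, hij, h⟩
    exact ⟨hst.symm, i, j, hij, h.symm⟩⟩
  loopless := ⟨fun s h => h.1 rfl⟩

/-- `s` lies in the orbit of `ξ` under the group generated by the actions of the
generators `a_{(ij)}`, `i < j`, on infinite words (each generator is an involution, so the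
orbit is the set of images of `ξ` under finite products of generators). -/
noncomputable def inOrbit {k : ℕ} (ξ s : ℕ → Fin k) : Prop :=
  ∃ l : List (Fin k × Fin k), (∀ p ∈ l, p.1 < p.2) ∧
    l.foldl (fun t p => hMoveInf p.1 p.2 t) ξ = s

/-- `γ(n)`: the number of vertices of the orbital Schreier graph `Γ_ξ` (whose vertex set
is the orbit of `ξ`) at graph distance at most `n` from `ξ`. -/
noncomputable def orbitalGrowth {k : ℕ} (ξ : ℕ → Fin k) (n : ℕ) : ℕ :=
  {s | inOrbit ξ s ∧ (infGraph k).dist ξ s ≤ n}.ncard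

/-!
Read a word as a configuration of the Tower of Hanoi with `k` pegs: position `d` is disk `d`
(a smaller index is a smaller disk) and its letter is the peg it sits on. The generator
`a_{(ij)}` moves the smallest disk on pegs `i` and `j` to the other of the two pegs, so a path
of length `n` in `Γ` is a legal game of `n` moves starting with all disks on peg `0`.

In such a game the itinerary of a disk (the list of pegs it visits) is never a prefix of the
itinerary of a larger disk that has moved: the larger disk can only move while the smaller one
avoids both its source and its target. So the moved disks form an initial segment and have
pairwise distinct itineraries; at most `(k + 1) ^ J` of them move at most `J` times and at most
`n / (J + 1)` move more often. Every word at distance `n` from `ξ` is therefore supported on the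
first `(k + 1) ^ J + n / (J + 1)` positions, for every `J`, whence `log γ(n) = o(n)`.
-/

open Filter Topology Asymptotics

theorem isLittleO_natCast_of_forall_le_add_mul {f : ℕ → ℝ} (hf : ∀ n, 0 ≤ f n)
    (h : ∀ ε > 0, ∃ A, ∀ n, f n ≤ A + ε * n) : f =o[atTop] fun n => (n : ℝ) := by
  refine isLittleO_iff.2 fun ε hε => ?_
  obtain ⟨A, hA⟩ := h (ε / 2) (half_pos hε)
  filter_upwards [eventually_ge_atTop ⌈2 * A / ε⌉₊] with n hn
  have hAn : 2 * A / ε ≤ n := Nat.ceil_le.1 hn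
  rw [div_le_iff₀ hε] at hAn
  rw [Real.norm_of_nonneg (hf n), Real.norm_natCast]
  linarith [hA n]

theorem tendsto_rpow_one_div_of_log_isLittleO {g : ℕ → ℝ} (hg : ∀ n, 0 < g n)
    (h : (fun n => Real.log (g n)) =o[atTop] fun n => (n : ℝ)) :
    Tendsto (fun n : ℕ => g n ^ (1 / (n : ℝ))) atTop (𝓝 1) := by
  have hexp := (Real.continuous_exp.tendsto 0).comp h.tendsto_div_nhds_zero
  rw [Real.exp_zero] at hexp
  refine hexp.congr fun n => ?_
  rw [Real.rpow_def_of_pos (hg n), mul_one_div]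
  rfl

namespace Hanoi

variable {α : Type*}

theorem injOn_getElem?_of_length_le (J : ℕ) :
    Set.InjOn (fun (l : List α) (i : Fin J) => l[(i : ℕ)]?) {l | l.length ≤ J} := by
  intro l (hl : l.length ≤ J) l' (hl' : l'.length ≤ J) heq
  refine List.ext_getElem? fun i => ?_
  by_cases hi : i < J
  · exact congrFun heq ⟨i, hi⟩
  · rw [List.getElem?_eq_none (by omega), List.getElem?_eq_none (by omega)]

theorem injOn_restrict_of_eq_of_le {β : Type*} (c : β) (B : ℕ) :
    Set.InjOn (fun (s : ℕ → β) (i : Fin B) => s i) {s | ∀ d, B ≤ d → s d = c} := by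
  intro s hs s' hs' heq
  funext d
  by_cases hd : d < B
  · exact congrFun heq ⟨d, hd⟩
  · rw [hs d (not_lt.1 hd), hs' d (not_lt.1 hd)]

def IsMove (s t : ℕ → α) : Prop :=
  ∀ d, s d ≠ t d → (∀ e ≠ d, s e = t e) ∧ ∀ e < d, s e ≠ s d ∧ s e ≠ t d

theorem IsMove.symm {s t : ℕ → α} (h : IsMove s t) : IsMove t s := by
  intro d hd
  obtain ⟨hfix, hfree⟩ := h d (Ne.symm hd)
  refine ⟨fun e he => (hfix e he).symm, fun e he => ?_⟩
  rw [← hfix e he.ne]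
  exact (hfree e he).symm

theorem IsMove.eq_of_ne {s t : ℕ → α} (h : IsMove s t) {d e : ℕ} (hd : s d ≠ t d)
    (he : s e ≠ t e) : d = e := by
  by_contra hde
  exact he ((h d hd).1 e (Ne.symm hde))

/-- `H d` is the itinerary of disk `d`, which starts on peg `c`: the pegs it has moved to, in
order. -/
structure IsHistory (c : α) (s : ℕ → α) (H : ℕ → List α) (m : ℕ) : Prop where
  getLast_eq : ∀ d, (H d).getLast?.getD c = s d
  not_prefix : ∀ d d', d < d' → H d' ≠ [] → ¬ H d <+: H d'
  sum_length_le : ∀ N, ∑ d ∈ Finset.range N, (H d).length ≤ m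

namespace IsHistory

variable {c : α} {s t : ℕ → α} {H : ℕ → List α} {m : ℕ}

theorem const (c : α) : IsHistory c (fun _ => c) (fun _ => []) 0 where
  getLast_eq _ := rfl
  not_prefix _ _ _ h := absurd rfl h
  sum_length_le _ := by simp

theorem step [DecidableEq α] (hH : IsHistory c s H m) (hst : IsMove s t) :
    IsHistory c t (fun d => if s d = t d then H d else H d ++ [t d]) (m + 1) where
  getLast_eq d := by
    by_cases h : s d = t d
    · rw [if_pos h, hH.getLast_eq d, h]
    · simp [if_neg h]
  sum_length_le N := by
    calc ∑ d ∈ Finset.range N, (if s d = t d then H d else H d ++ [t d]).length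
        = ∑ d ∈ Finset.range N, (H d).length +
            ((Finset.range N).filter fun d => s d ≠ t d).card := by
          rw [Finset.card_filter, ← Finset.sum_add_distrib]
          refine Finset.sum_congr rfl fun d _ => ?_
          split_ifs <;> simp_all
      _ ≤ m + 1 := by
          refine add_le_add (hH.sum_length_le N) (Finset.card_le_one.2 fun d hd e he => ?_)
          exact hst.eq_of_ne (Finset.mem_filter.1 hd).2 (Finset.mem_filter.1 he).2
  not_prefix d d' hlt hne hpre := by
    by_cases hd' : s d' = t d'
    · simp only [if_pos hd'] at hne hpre
      by_cases hd : s d = t d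
      · simp only [if_pos hd] at hpre
        exact hH.not_prefix d d' hlt hne hpre
      · simp only [if_neg hd] at hpre
        exact hH.not_prefix d d' hlt hne ((List.prefix_append _ _).trans hpre)
    · obtain ⟨hfix, hfree⟩ := hst d' hd'
      obtain ⟨hsrc, htgt⟩ := hfree d hlt
      have hd : s d = t d := hfix d hlt.ne
      simp only [if_pos hd, if_neg hd'] at hpre
      rcases List.prefix_concat_iff.1 hpre with heq | hpre
      · apply htgt
        rw [← hH.getLast_eq d, heq]
        simp
      · by_cases hnil : H d' = []
        · rw [hnil, List.prefix_nil] at hpre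
          apply hsrc
          rw [← hH.getLast_eq d, ← hH.getLast_eq d', hnil, hpre]
        · exact hH.not_prefix d d' hlt hnil hpre

theorem ne_nil_of_ne (hH : IsHistory c s H m) {d : ℕ} (h : s d ≠ c) : H d ≠ [] := by
  intro hnil
  apply h
  rw [← hH.getLast_eq d, hnil]
  rfl

theorem ne_nil_of_lt (hH : IsHistory c s H m) {d d' : ℕ} (hlt : d < d') (h : H d' ≠ []) :
    H d ≠ [] :=
  fun hnil => hH.not_prefix d d' hlt h (hnil ▸ List.nil_prefix)

theorem injOn (hH : IsHistory c s H m) : Set.InjOn H {d | H d ≠ []} := by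
  intro d hd d' hd' heq
  by_contra hne
  rcases lt_or_gt_of_ne hne with hlt | hlt
  · exact hH.not_prefix d d' hlt hd' (heq ▸ List.prefix_refl _)
  · exact hH.not_prefix d' d hlt hd (heq ▸ List.prefix_refl _)

theorem lt_pow_add_div_of_ne [Fintype α] (hH : IsHistory c s H m) {d : ℕ} (h : s d ≠ c)
    (J : ℕ) :
    d < (Fintype.card α + 1) ^ J + m / (J + 1) := by
  classical
  set S := Finset.range (d + 1)
  have hmoved : ∀ e ∈ S, H e ≠ [] := fun e he =>
    (Nat.lt_succ_iff.1 (Finset.mem_range.1 he)).eq_or_lt.elim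
      (fun hed => hed ▸ hH.ne_nil_of_ne h) (fun hlt => hH.ne_nil_of_lt hlt (hH.ne_nil_of_ne h))
  have hshort : (S.filter fun e => (H e).length ≤ J).card ≤ (Fintype.card α + 1) ^ J := by
    have hinj : Set.InjOn (fun e (i : Fin J) => (H e)[(i : ℕ)]?)
        (S.filter fun e => (H e).length ≤ J) :=
      (injOn_getElem?_of_length_le J).comp
        (hH.injOn.mono fun e he => hmoved e (Finset.mem_filter.1 he).1)
        fun e he => (Finset.mem_filter.1 he).2
    simpa using Finset.card_le_card_of_injOn _ (fun e _ => Finset.mem_univ _) hinj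
  have hlong : (S.filter fun e => ¬ (H e).length ≤ J).card ≤ m / (J + 1) := by
    rw [Nat.le_div_iff_mul_le J.succ_pos]
    calc (S.filter fun e => ¬ (H e).length ≤ J).card * (J + 1)
        ≤ ∑ e ∈ S.filter fun e => ¬ (H e).length ≤ J, (H e).length := by
          rw [← smul_eq_mul]
          exact Finset.card_nsmul_le_sum _ _ _ fun e he => by
            simpa using (Finset.mem_filter.1 he).2
      _ ≤ ∑ e ∈ S, (H e).length := Finset.sum_le_sum_of_subset (Finset.filter_subset _ _)
      _ ≤ m := hH.sum_length_le (d + 1)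
  have hcard := Finset.card_filter_add_card_filter_not (s := S) fun e => (H e).length ≤ J
  rw [Finset.card_range] at hcard
  omega

end IsHistory

variable {k : ℕ}

theorem isMove_hMoveInf (i j : Fin k) (s : ℕ → Fin k) : IsMove s (hMoveInf i j s) := by
  have hfirst : ∀ {d}, s d ≠ hMoveInf i j s d →
      (s d = i ∨ s d = j) ∧ ∀ e < d, s e ≠ i ∧ s e ≠ j := fun {d} h => by
    unfold hMoveInf at h
    split_ifs at h with hd
    exacts [hd, absurd rfl h]
  have hfixed : ∀ {e}, ¬ ((s e = i ∨ s e = j) ∧ ∀ l < e, s l ≠ i ∧ s l ≠ j) →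
      s e = hMoveInf i j s e := fun {e} h => by
    unfold hMoveInf
    rw [if_neg h]
  intro d hd
  obtain ⟨hij, hbelow⟩ := hfirst hd
  refine ⟨fun e hed => hfixed fun he => ?_, fun e hed => ?_⟩
  · rcases lt_or_gt_of_ne hed with hlt | hlt
    · exact he.1.elim (hbelow e hlt).1 (hbelow e hlt).2
    · exact hij.elim (he.2 d hlt).1 (he.2 d hlt).2
  · obtain ⟨hei, hej⟩ := hbelow e hed
    have htgt : hMoveInf i j s d = Equiv.swap i j (s d) := by
      unfold hMoveInf
      exact if_pos ⟨hij, hbelow⟩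
    rcases hij with h | h
    · rw [htgt, h, Equiv.swap_apply_left]
      exact ⟨hei, hej⟩
    · rw [htgt, h, Equiv.swap_apply_right]
      exact ⟨hej, hei⟩

theorem isMove_of_adj {s t : ℕ → Fin k} (h : (infGraph k).Adj s t) : IsMove s t := by
  obtain ⟨-, i, j, -, hst | hts⟩ := h
  · exact hst ▸ isMove_hMoveInf i j s
  · exact (hts ▸ isMove_hMoveInf i j t).symm

theorem IsHistory.exists_of_walk {c : Fin k} {s t : ℕ → Fin k} {H : ℕ → List (Fin k)}
    {m : ℕ} (hH : IsHistory c s H m) (w : (infGraph k).Walk s t) :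
    ∃ H', IsHistory c t H' (m + w.length) := by
  induction w generalizing H m with
  | nil => exact ⟨H, hH⟩
  | cons hadj w ih =>
    obtain ⟨H', hH'⟩ := ih (hH.step (isMove_of_adj hadj))
    exact ⟨H', by rwa [SimpleGraph.Walk.length_cons, ← add_assoc, add_right_comm]⟩

theorem reachable_hMoveInf {i j : Fin k} (hij : i < j) (s : ℕ → Fin k) :
    (infGraph k).Reachable s (hMoveInf i j s) := by
  by_cases h : s = hMoveInf i j s
  · exact h ▸ SimpleGraph.Reachable.refl s
  · exact SimpleGraph.Adj.reachable ⟨h, i, j, hij, Or.inl rfl⟩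

theorem reachable_of_inOrbit {ξ s : ℕ → Fin k} (h : inOrbit ξ s) :
    (infGraph k).Reachable ξ s := by
  obtain ⟨l, hl, rfl⟩ := h
  induction l generalizing ξ with
  | nil => exact SimpleGraph.Reachable.refl ξ
  | cons p l ih =>
    exact (reachable_hMoveInf (hl p List.mem_cons_self) ξ).trans
      (ih fun q hq => hl q (List.mem_cons_of_mem p hq))

theorem lt_pow_add_div_of_inOrbit {c : Fin k} {s : ℕ → Fin k} (hs : inOrbit (fun _ => c) s)
    {n : ℕ} (hn : (infGraph k).dist (fun _ => c) s ≤ n) {d : ℕ} (hd : s d ≠ c) (J : ℕ) :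
    d < (k + 1) ^ J + n / (J + 1) := by
  obtain ⟨w, hw⟩ := (reachable_of_inOrbit hs).exists_walk_length_eq_dist
  obtain ⟨H, hH⟩ := (IsHistory.const c).exists_of_walk w
  calc d < (Fintype.card (Fin k) + 1) ^ J + (0 + w.length) / (J + 1) := hH.lt_pow_add_div_of_ne hd J
    _ ≤ (k + 1) ^ J + n / (J + 1) := by
      rw [Fintype.card_fin, zero_add]
      gcongr
      omega

theorem ball_subset (c : Fin k) (n J : ℕ) :
    {s | inOrbit (fun _ => c) s ∧ (infGraph k).dist (fun _ => c) s ≤ n} ⊆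
      {s | ∀ d, (k + 1) ^ J + n / (J + 1) ≤ d → s d = c} := fun _ ⟨hs, hn⟩ _ hd =>
  not_not.1 fun h => (lt_pow_add_div_of_inOrbit hs hn h J).not_ge hd

theorem orbitalGrowth_le (c : Fin k) (n J : ℕ) :
    orbitalGrowth (fun _ => c) n ≤ k ^ ((k + 1) ^ J + n / (J + 1)) := by
  have := Set.ncard_le_ncard_of_injOn _ (fun _ _ => Set.mem_univ _)
    ((injOn_restrict_of_eq_of_le c _).mono (ball_subset c n J)) Set.finite_univ
  simpa [orbitalGrowth, Set.ncard_univ] using this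

theorem one_le_orbitalGrowth (c : Fin k) (n : ℕ) : 1 ≤ orbitalGrowth (fun _ => c) n := by
  have hfin := Set.Finite.of_finite_image (Set.toFinite _)
    ((injOn_restrict_of_eq_of_le c _).mono (ball_subset c n 0))
  exact (Set.ncard_pos hfin).2
    ⟨fun _ => c, ⟨[], fun _ h => absurd h List.not_mem_nil, rfl⟩, by simp⟩

theorem log_orbitalGrowth_le (c : Fin k) (n J : ℕ) :
    Real.log (orbitalGrowth (fun _ => c) n) ≤
      Real.log k * (k + 1) ^ J + Real.log k / (J + 1) * n := by
  have hlogk : 0 ≤ Real.log k := Real.log_nonneg (by exact_mod_cast c.pos)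
  calc Real.log (orbitalGrowth (fun _ => c) n)
      ≤ Real.log ((k : ℝ) ^ ((k + 1) ^ J + n / (J + 1))) := by
        refine Real.log_le_log (by exact_mod_cast one_le_orbitalGrowth c n) ?_
        exact_mod_cast orbitalGrowth_le c n J
    _ ≤ Real.log k * (k + 1) ^ J + Real.log k / (J + 1) * n := by
        rw [Real.log_pow, mul_comm]
        push_cast
        rw [mul_add, div_mul_eq_mul_div, mul_div_assoc]
        gcongr
        exact_mod_cast Nat.cast_div_le (α := ℝ) (m := n) (n := J + 1)

end Hanoi

/-- For every `k ≥ 3`, the orbital Schreier graph `Γ_{000…}` of `H(k)`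
has subexponential growth: `γ(n)^(1/n) → 1` as `n → ∞`. -/
theorem hanoi_orbital_growth_subexponential (k : ℕ) (hk : 3 ≤ k) :
    Filter.Tendsto
      (fun n : ℕ => (orbitalGrowth (fun _ => (⟨0, by omega⟩ : Fin k)) n : ℝ) ^ (1 / (n : ℝ)))
      Filter.atTop (nhds 1) := by
  set c : Fin k := ⟨0, by omega⟩
  have hγ : ∀ n, (1 : ℝ) ≤ orbitalGrowth (fun _ => c) n := fun n => by
    exact_mod_cast Hanoi.one_le_orbitalGrowth c n
  have hlogk : 0 < Real.log k := Real.log_pos (by exact_mod_cast (by omega : 1 < k))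
  refine tendsto_rpow_one_div_of_log_isLittleO (fun n => one_pos.trans_le (hγ n))
    (isLittleO_natCast_of_forall_le_add_mul (fun n => Real.log_nonneg (hγ n)) fun ε hε => ?_)
  obtain ⟨J, hJ⟩ := exists_nat_one_div_lt (div_pos hε hlogk)
  refine ⟨Real.log k * (k + 1) ^ J, fun n => (Hanoi.log_orbitalGrowth_le c n J).trans ?_⟩
  have hJε : Real.log k / (J + 1) ≤ ε := by
    rw [← mul_one_div]
    exact ((lt_div_iff₀' hlogk).1 hJ).le
  gcongr
end

section
/- For the Hanoi Towers group H(3) and every n ≥ 1, the set of real eigenvalues of the adjacency matrix T_n of the level-n Schreier graph has exactly 3·2^{n−1} − 1 elements. -/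
/-- The action of the generator `a_{(ij)}` on words of length `n`, viewed as functions
`Fin n → Fin k` (via the word `List.ofFn u`; the action preserves length). -/
def levelMove {k n : ℕ} (i j : Fin k) (u : Fin n → Fin k) : Fin n → Fin k :=
  fun m => (hMove i j (List.ofFn u)).get
    (Fin.cast (by rw [hMove_length, List.length_ofFn]) m)

/-- The level-`n` Schreier graph `Γ_n` of `H(k)`: vertices are the `k^n` words of length
`n` over `{0, …, k-1}`, and `u`, `v` are adjacent iff `u ≠ v` and some generator
`a_{(ij)}` (with `i < j`) maps one to the other. -/
def levelGraph (k n : ℕ) : SimpleGraph (Fin n → Fin k) where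
  Adj u v := u ≠ v ∧ ∃ i j : Fin k, i < j ∧ (levelMove i j u = v ∨ levelMove i j v = u)
  symm := ⟨by
    rintro u v ⟨huv, i, j, hij, h⟩
    exact ⟨huv.symm, i, j, hij, h.symm⟩⟩
  loopless := ⟨fun u h => h.1 rfl⟩

open Classical in
/-- The adjacency matrix `T_n = Σ_{i<j} ρ_n(a_{(ij)})` of the level-`n` Schreier graph of
`H(k)`: the `(u,v)` entry counts the generators `a_{(ij)}`, `i < j`, with
`a_{(ij)}(v) = u` (each summand is the permutation matrix of `ρ_n(a_{(ij)})`). -/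
noncomputable def adjMat (k n : ℕ) : Matrix (Fin n → Fin k) (Fin n → Fin k) ℝ :=
  Matrix.of fun u v =>
    ((Finset.univ.filter
      fun p : Fin k × Fin k => p.1 < p.2 ∧ levelMove p.1 p.2 v = u).card : ℝ)

/-- The polynomial `f(x) = x² - x - 3`, as a map `ℝ → ℝ`. -/
def hanoiPoly : ℝ → ℝ := fun x => x ^ 2 - x - 3

/-!
Split a word of length `n + 1` as `x t`. Of the three generators, the one avoiding `x`
(`complMove x`) acts on the tail and the other two change the letter `x`. Hence for an eigenvector
`w` of `T_{n+1}` with eigenvalue `μ` the fiber sum `s t = ∑ x, w (x t)` satisfies `T_n s = f(μ) s`,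
where `f = hanoiPoly`, while `s = 0` forces `μ ∈ {0, -2}`. Conversely,
`w (x t) = (μ + 1) v t + v (complMove x t)` lifts an eigenvector `v` of `T_n` for `f(μ)` to one of
`T_{n+1}` for `μ ∉ {0, -2}`. As `0` and `-2` are eigenvalues from levels 1 and 2 on, and
`f(-2) = 3` at every level, the spectra `σ_n` of `T_n` satisfy `σ_{n+1} = {0} ∪ f⁻¹(σ_n)` for
`n ≥ 1`, starting from `σ_1 = {0, 3}`.
By induction `σ_n ⊆ [-2, 3]`, where every point has two preimages under `f`, and
`f(0) = -3 ∉ σ_n`; hence `|σ_{n+1}| = 2 |σ_n| + 1`.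
-/

open Matrix

lemma Matrix.mem_spectrum_iff_exists_mulVec_eq_smul {ι K : Type*} [Fintype ι] [DecidableEq ι]
    [Field K] (A : Matrix ι ι K) (μ : K) :
    μ ∈ spectrum K A ↔ ∃ v ≠ 0, A *ᵥ v = μ • v := by
  rw [← Matrix.spectrum_toLin', ← Module.End.hasEigenvalue_iff_mem_spectrum,
    Module.End.hasEigenvalue_iff, Submodule.ne_bot_iff]
  simp [and_comm]

lemma Set.ncard_preimage_of_forall_ncard_preimage_singleton {α β : Type*} {f : α → β}
    {s : Set β} {m : ℕ} (hs : s.Finite) (hm : m ≠ 0) (hfib : ∀ b ∈ s, (f ⁻¹' {b}).ncard = m) :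
    (f ⁻¹' s).ncard = m * s.ncard := by
  induction s, hs using Set.Finite.induction_on with
  | empty => simp
  | @insert b s hb hs ih =>
    have hfib' : ∀ b' ∈ s, (f ⁻¹' {b'}).ncard = m := fun b' hb' => hfib b' (by simp [hb'])
    have hfin (b' : β) (hb' : (f ⁻¹' {b'}).ncard = m) : (f ⁻¹' {b'}).Finite :=
      finite_of_ncard_ne_zero (hb' ▸ hm)
    rw [Set.insert_eq, Set.preimage_union,
      Set.ncard_union_eq ((disjoint_singleton_left.2 hb).preimage f) (hfin b (hfib b (by simp)))
        (hs.preimage' fun b' hb' => hfin b' (hfib' b' hb')),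
      hfib b (by simp), ih hfib',
      Set.ncard_union_eq (disjoint_singleton_left.2 hb) (finite_singleton b) hs, ncard_singleton]
    ring

section LevelMove

variable {k n : ℕ} (i j : Fin k)

lemma ofFn_levelMove (u : Fin n → Fin k) :
    List.ofFn (levelMove i j u) = hMove i j (List.ofFn u) :=
  List.ext_get (by simp [hMove_length]) fun _ _ _ => by simp [levelMove]

lemma levelMove_levelMove (u : Fin n → Fin k) : levelMove i j (levelMove i j u) = u := by
  apply List.ofFn_injective
  rw [ofFn_levelMove, ofFn_levelMove, hMove_involutive]

lemma levelMove_eq_iff {u v : Fin n → Fin k} : levelMove i j v = u ↔ v = levelMove i j u := by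
  constructor <;> rintro rfl <;> rw [levelMove_levelMove]

lemma levelMove_cons (x : Fin k) (u : Fin n → Fin k) :
    levelMove i j (Fin.cons x u) =
      if x = i then Fin.cons j u else if x = j then Fin.cons i u
        else Fin.cons x (levelMove i j u) := by
  apply List.ofFn_injective
  rw [ofFn_levelMove, List.ofFn_cons]
  split_ifs <;> simp [hMove, ofFn_levelMove, *]

end LevelMove

lemma adjMat_mulVec_apply {k n : ℕ} (w : (Fin n → Fin k) → ℝ) (u : Fin n → Fin k) :
    (adjMat k n *ᵥ w) u = ∑ p : Fin k × Fin k with p.1 < p.2, w (levelMove p.1 p.2 u) := by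
  classical
  simp only [mulVec, dotProduct, adjMat, of_apply, Finset.card_filter, Nat.cast_sum,
    Finset.sum_mul]
  rw [Finset.sum_comm, Finset.sum_filter]
  refine Finset.sum_congr rfl fun p _ => ?_
  split_ifs with hp <;> simp [hp, levelMove_eq_iff]

lemma adjMat_three_mulVec_apply {n : ℕ} (w : (Fin n → Fin 3) → ℝ) (u : Fin n → Fin 3) :
    (adjMat 3 n *ᵥ w) u = w (levelMove 0 1 u) + w (levelMove 0 2 u) + w (levelMove 1 2 u) := by
  have hpairs :
      Finset.univ.filter (fun p : Fin 3 × Fin 3 => p.1 < p.2) = {(0, 1), (0, 2), (1, 2)} := by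
    decide
  rw [adjMat_mulVec_apply, hpairs, Finset.sum_insert (by decide), Finset.sum_pair (by decide),
    add_assoc]

def complMove {n : ℕ} : Fin 3 → (Fin n → Fin 3) → Fin n → Fin 3
  | 0 => levelMove 1 2
  | 1 => levelMove 0 2
  | 2 => levelMove 0 1

def fiberSum {n : ℕ} (w : (Fin (n + 1) → Fin 3) → ℝ) (t : Fin n → Fin 3) : ℝ :=
  ∑ x, w (Fin.cons x t)

section Renormalization

variable {n : ℕ}

lemma complMove_complMove (x : Fin 3) (t : Fin n → Fin 3) : complMove x (complMove x t) = t := by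
  fin_cases x <;> exact levelMove_levelMove _ _ t

lemma sum_complMove (v : (Fin n → Fin 3) → ℝ) (t : Fin n → Fin 3) :
    ∑ x, v (complMove x t) = (adjMat 3 n *ᵥ v) t := by
  rw [Fin.sum_univ_three, adjMat_three_mulVec_apply]
  simp only [complMove]
  ring

lemma adjMat_mulVec_cons (w : (Fin (n + 1) → Fin 3) → ℝ) (x : Fin 3) (t : Fin n → Fin 3) :
    (adjMat 3 (n + 1) *ᵥ w) (Fin.cons x t) =
      fiberSum w t - w (Fin.cons x t) + w (Fin.cons x (complMove x t)) := by
  rw [adjMat_three_mulVec_apply, fiberSum, Fin.sum_univ_three]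
  fin_cases x <;> simp [levelMove_cons, complMove] <;> ring

lemma adjMat_mulVec_eq_smul_iff {w : (Fin (n + 1) → Fin 3) → ℝ} {μ : ℝ} :
    adjMat 3 (n + 1) *ᵥ w = μ • w ↔
      ∀ x t, w (Fin.cons x (complMove x t)) = (μ + 1) * w (Fin.cons x t) - fiberSum w t := by
  constructor
  · intro h x t
    have := congrFun h (Fin.cons x t)
    rw [adjMat_mulVec_cons] at this
    simp only [Pi.smul_apply, smul_eq_mul] at this
    linarith
  · intro h
    funext u
    rw [← Fin.cons_self_tail u, adjMat_mulVec_cons, h]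
    simp only [Pi.smul_apply, smul_eq_mul]
    ring

variable {w : (Fin (n + 1) → Fin 3) → ℝ} {μ : ℝ}

lemma fiberSum_complMove (h : adjMat 3 (n + 1) *ᵥ w = μ • w) (x : Fin 3) (t : Fin n → Fin 3) :
    fiberSum w (complMove x t) = μ * (μ + 2) * w (Fin.cons x t) - (μ + 1) * fiberSum w t := by
  rw [adjMat_mulVec_eq_smul_iff] at h
  have h' := h x (complMove x t)
  rw [complMove_complMove, h x t] at h'
  linear_combination h'

lemma adjMat_mulVec_fiberSum (h : adjMat 3 (n + 1) *ᵥ w = μ • w) :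
    adjMat 3 n *ᵥ fiberSum w = hanoiPoly μ • fiberSum w := by
  funext t
  rw [← sum_complMove, Finset.sum_congr rfl fun x _ => fiberSum_complMove h x t,
    Finset.sum_sub_distrib, ← Finset.mul_sum, Finset.sum_const]
  simp only [fiberSum, Finset.card_univ, Fintype.card_fin, Pi.smul_apply, smul_eq_mul, hanoiPoly]
  ring

end Renormalization

section Lift

variable {n : ℕ} {μ : ℝ} {v : (Fin n → Fin 3) → ℝ}

def liftVec (μ : ℝ) (v : (Fin n → Fin 3) → ℝ) (u : Fin (n + 1) → Fin 3) : ℝ :=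
  (μ + 1) * v (Fin.tail u) + v (complMove (u 0) (Fin.tail u))

@[simp]
lemma liftVec_cons (x : Fin 3) (t : Fin n → Fin 3) :
    liftVec μ v (Fin.cons x t) = (μ + 1) * v t + v (complMove x t) := by
  simp [liftVec]

lemma fiberSum_liftVec (h : adjMat 3 n *ᵥ v = hanoiPoly μ • v) :
    fiberSum (liftVec μ v) = (μ * (μ + 2)) • v := by
  funext t
  have ht := congrFun h t
  rw [← sum_complMove] at ht
  simp only [fiberSum, liftVec_cons, Finset.sum_add_distrib, Finset.sum_const,
    Finset.card_univ, Fintype.card_fin, ht, Pi.smul_apply, smul_eq_mul, hanoiPoly]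
  ring

lemma adjMat_mulVec_liftVec (h : adjMat 3 n *ᵥ v = hanoiPoly μ • v) :
    adjMat 3 (n + 1) *ᵥ liftVec μ v = μ • liftVec μ v := by
  rw [adjMat_mulVec_eq_smul_iff]
  intro x t
  rw [fiberSum_liftVec h, liftVec_cons, liftVec_cons, complMove_complMove]
  simp only [Pi.smul_apply, smul_eq_mul]
  ring

end Lift

section Spectrum

variable {n : ℕ} {μ : ℝ}

lemma three_mem_spectrum (n : ℕ) : (3 : ℝ) ∈ spectrum ℝ (adjMat 3 n) := by
  refine (mem_spectrum_iff_exists_mulVec_eq_smul _ _).2 ⟨fun _ => 1, ?_, ?_⟩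
  · exact Function.ne_iff.2 ⟨fun _ => 0, one_ne_zero⟩
  · funext u
    rw [adjMat_three_mulVec_apply]
    norm_num

lemma zero_mem_spectrum_succ (n : ℕ) : (0 : ℝ) ∈ spectrum ℝ (adjMat 3 (n + 1)) := by
  refine (mem_spectrum_iff_exists_mulVec_eq_smul _ _).2 ⟨fun u => ![1, -1, 0] (u 0), ?_, ?_⟩
  · exact Function.ne_iff.2 ⟨fun _ => 0, by simp⟩
  · rw [adjMat_mulVec_eq_smul_iff]
    intro x t
    simp [fiberSum, Fin.sum_univ_three]

-- `w (x y t) = χ (y - x)` with `χ = (0, 1, -1)`: the fiber sums vanish and `complMove x`, which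
-- swaps the two letters other than `x`, flips the sign.
lemma neg_two_mem_spectrum_add_two (n : ℕ) : (-2 : ℝ) ∈ spectrum ℝ (adjMat 3 (n + 2)) := by
  refine (mem_spectrum_iff_exists_mulVec_eq_smul _ _).2
    ⟨fun u => ![![0, 1, -1], ![-1, 0, 1], ![1, -1, 0]] (u 0) (u 1), ?_, ?_⟩
  · exact Function.ne_iff.2 ⟨Fin.cons 0 (Fin.cons 1 fun _ => 0), by simp⟩
  · rw [adjMat_mulVec_eq_smul_iff]
    intro x t
    induction t using Fin.consCases with
    | cons y s =>
      fin_cases x <;> fin_cases y <;>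
        simp [fiberSum, Fin.sum_univ_three, complMove, levelMove_cons] <;> norm_num

lemma spectrum_adjMat_one : spectrum ℝ (adjMat 3 1) = {0, 3} := by
  ext μ
  refine ⟨fun hμ => ?_, ?_⟩
  · obtain ⟨w, hw, h⟩ := (mem_spectrum_iff_exists_mulVec_eq_smul _ _).1 hμ
    rw [adjMat_mulVec_eq_smul_iff] at h
    have key (x : Fin 3) (t : Fin 0 → Fin 3) : μ * w (Fin.cons x t) = fiberSum w t := by
      have := h x t
      rw [show complMove x t = t from Subsingleton.elim _ _] at this
      linarith
    obtain ⟨u, hu : w u ≠ 0⟩ := Function.support_nonempty_iff.2 hw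
    induction u using Fin.consCases with
    | cons x t =>
      rcases eq_or_ne (fiberSum w t) 0 with hs | hs
      · left
        exact (mul_eq_zero.1 ((key x t).trans hs)).resolve_right hu
      · right
        have hsum : μ * fiberSum w t = 3 * fiberSum w t := by
          simp only [fiberSum, Finset.mul_sum, key, Finset.sum_const, Finset.card_univ,
            Fintype.card_fin, nsmul_eq_mul, Nat.cast_ofNat]
        exact mul_right_cancel₀ hs hsum
  · rintro (rfl | rfl)
    · exact zero_mem_spectrum_succ 0
    · exact three_mem_spectrum 1

lemma eq_zero_or_hanoiPoly_mem_spectrum (hμ : μ ∈ spectrum ℝ (adjMat 3 (n + 1))) :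
    μ = 0 ∨ hanoiPoly μ ∈ spectrum ℝ (adjMat 3 n) := by
  obtain ⟨w, hw, h⟩ := (mem_spectrum_iff_exists_mulVec_eq_smul _ _).1 hμ
  by_cases hs : fiberSum w = 0
  · obtain ⟨u, hu : w u ≠ 0⟩ := Function.support_nonempty_iff.2 hw
    induction u using Fin.consCases with
    | cons x t =>
      have hdeg : μ * (μ + 2) * w (Fin.cons x t) = 0 := by
        simpa [hs] using (fiberSum_complMove h x t).symm
      rcases mul_eq_zero.1 ((mul_eq_zero.1 hdeg).resolve_right hu) with h0 | h2
      · exact Or.inl h0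
      · obtain rfl : μ = -2 := by linarith
        right
        norm_num [hanoiPoly, three_mem_spectrum]
  · exact Or.inr ((mem_spectrum_iff_exists_mulVec_eq_smul _ _).2
      ⟨fiberSum w, hs, adjMat_mulVec_fiberSum h⟩)

lemma mem_spectrum_succ_of_hanoiPoly_mem (h0 : μ ≠ 0) (h2 : μ ≠ -2)
    (hμ : hanoiPoly μ ∈ spectrum ℝ (adjMat 3 n)) : μ ∈ spectrum ℝ (adjMat 3 (n + 1)) := by
  obtain ⟨v, hv, h⟩ := (mem_spectrum_iff_exists_mulVec_eq_smul _ _).1 hμ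
  refine (mem_spectrum_iff_exists_mulVec_eq_smul _ _).2
    ⟨liftVec μ v, fun hw => hv ?_, adjMat_mulVec_liftVec h⟩
  have hμ2 : μ * (μ + 2) ≠ 0 := mul_ne_zero h0 fun h => h2 (by linarith)
  have hsum := fiberSum_liftVec h
  rw [hw] at hsum
  have hzero : fiberSum (0 : (Fin (n + 1) → Fin 3) → ℝ) = 0 :=
    funext fun t => by simp [fiberSum]
  exact (smul_eq_zero.1 (hsum.symm.trans hzero)).resolve_left hμ2

lemma spectrum_adjMat_subset_Icc (hn : 1 ≤ n) : spectrum ℝ (adjMat 3 n) ⊆ Set.Icc (-2) 3 := by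
  induction n, hn using Nat.le_induction with
  | base => rw [spectrum_adjMat_one]; norm_num [Set.insert_subset_iff]
  | succ n hn ih =>
    intro μ hμ
    rcases eq_zero_or_hanoiPoly_mem_spectrum hμ with rfl | h
    · norm_num
    · have := (ih h).2
      simp only [hanoiPoly] at this
      constructor <;> nlinarith

lemma spectrum_adjMat_succ (hn : 1 ≤ n) :
    spectrum ℝ (adjMat 3 (n + 1)) = insert 0 (hanoiPoly ⁻¹' spectrum ℝ (adjMat 3 n)) := by
  ext μ
  refine ⟨eq_zero_or_hanoiPoly_mem_spectrum, fun hμ => ?_⟩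
  rcases eq_or_ne μ 0 with rfl | h0
  · exact zero_mem_spectrum_succ n
  rcases eq_or_ne μ (-2) with rfl | h2
  · obtain ⟨m, rfl⟩ := Nat.exists_eq_add_of_le' hn
    exact neg_two_mem_spectrum_add_two m
  exact mem_spectrum_succ_of_hanoiPoly_mem h0 h2 (hμ.resolve_left h0)

end Spectrum

lemma hanoiPoly_preimage_singleton {y : ℝ} (hy : -13 / 4 < y) :
    hanoiPoly ⁻¹' {y} = {(1 + √(13 + 4 * y)) / 2, (1 - √(13 + 4 * y)) / 2} := by
  have hdisc : discrim 1 (-1) (-3 - y) = √(13 + 4 * y) * √(13 + 4 * y) := by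
    rw [Real.mul_self_sqrt (by linarith), discrim]
    ring
  ext x
  simp only [Set.mem_preimage, Set.mem_singleton_iff, Set.mem_insert_iff, hanoiPoly]
  have hroots := quadratic_eq_zero_iff one_ne_zero hdisc x
  simp only [neg_neg, mul_one] at hroots
  rw [← hroots, ← sub_eq_zero]
  ring_nf

lemma ncard_hanoiPoly_preimage {S : Set ℝ} (hS : S.Finite) (hS' : S ⊆ Set.Ioi (-13 / 4)) :
    (hanoiPoly ⁻¹' S).ncard = 2 * S.ncard := by
  refine Set.ncard_preimage_of_forall_ncard_preimage_singleton hS two_ne_zero fun y hy => ?_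
  have hy : -13 / 4 < y := hS' hy
  rw [hanoiPoly_preimage_singleton hy, Set.ncard_pair]
  have : 0 < √(13 + 4 * y) := Real.sqrt_pos.2 (by linarith)
  linarith

lemma ncard_spectrum_adjMat_succ {n : ℕ} (hn : 1 ≤ n) :
    (spectrum ℝ (adjMat 3 (n + 1))).ncard = 2 * (spectrum ℝ (adjMat 3 n)).ncard + 1 := by
  have hσ := spectrum_adjMat_subset_Icc hn
  have h0 : (0 : ℝ) ∉ hanoiPoly ⁻¹' spectrum ℝ (adjMat 3 n) := fun h =>
    absurd (hσ h).1 (by norm_num [hanoiPoly])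
  have hfin : (hanoiPoly ⁻¹' spectrum ℝ (adjMat 3 n)).Finite :=
    (finite_spectrum (adjMat 3 (n + 1))).subset
      (spectrum_adjMat_succ hn ▸ Set.subset_insert _ _)
  rw [spectrum_adjMat_succ hn, Set.ncard_insert_of_notMem h0 hfin,
    ncard_hanoiPoly_preimage (finite_spectrum _) fun y hy =>
      show -13 / 4 < y by linarith [(hσ hy).1]]

/-- For `H(3)` and every `n ≥ 1`, the set of real eigenvalues of the
adjacency matrix `T_n` of the level-`n` Schreier graph has exactly `3·2^(n-1) - 1`
elements. -/
theorem hanoi3_spectrum_card (n : ℕ) (hn : 1 ≤ n) :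
    (spectrum ℝ (adjMat 3 n)).ncard = 3 * 2 ^ (n - 1) - 1 := by
  induction n, hn using Nat.le_induction with
  | base => norm_num [spectrum_adjMat_one, Set.ncard_pair]
  | succ n hn ih =>
    rw [ncard_spectrum_adjMat_succ hn, ih]
    obtain ⟨m, rfl⟩ := Nat.exists_eq_add_of_le' hn
    have : 1 ≤ 2 ^ m := Nat.one_le_two_pow
    simp only [Nat.add_sub_cancel, pow_succ]
    omega
end

section
/- For the Hanoi Towers group H(3), the spectral gap δ(n) = 1 − λ(n) of the level-n Schreier graph, where λ(n) is the largest eigenvalue different from 1 of the Markov operator M_n = (1/3)T_n, decays exponentially: there exist constants 0 < c₁ ≤ c₂ < 1 and C₁, C₂ > 0 such that C₁·c₁^n ≤ δ(n) ≤ C₂·c₂^n for all n ≥ 1. -/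
/-!
Write `E(f) = ∑_s ∑_u (f (s u) - f u)²`, the sum over the three generators `s`, so that
`E(f) = 6 (⟪f, f⟫ - ⟪f, M_n f⟫)`.

Lower bound on `δ(n)`: a Poincaré inequality `3 ⟪f, f⟫ ≤ 7ⁿ E(f)` for `∑ f = 0`, by induction
on `n`. Split `f` into its restrictions `f₀, f₁, f₂` to the words starting with `0, 1, 2`; the
edges between these subtrees contribute `2 ∑ ‖f_x - f_y‖²` to `E(f)`, and the mean
`m = (f₀ + f₁ + f₂) / 3` satisfies `‖f‖² = 3 ‖m‖² + ∑ ‖f_x - m‖²` and `E(m) ≤ 2 E(f)`.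
The same inequality shows that the eigenvalue `1` is simple.

Upper bound on `δ(n)`: the function `u ↦ φ(last letter of u)`, `φ = (1, -1, 0)`, is orthogonal
to the constants and has `‖·‖² = 2 · 3ⁿ⁻¹` but energy only `12`, because a generator changes
the last letter only on the words `z⋯z x`. Its Rayleigh quotient `1 - 3¹⁻ⁿ` forces an eigenvalue
`≠ 1` at least that large.
-/

open Matrix

section Rayleigh

variable {ι : Type*} [Fintype ι]

theorem OrthonormalBasis.sum_dotProduct_mul_dotProduct
    (b : OrthonormalBasis ι ℝ (EuclideanSpace ℝ ι)) (x y : ι → ℝ) :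
    ∑ j, (⇑(b j) ⬝ᵥ x) * (⇑(b j) ⬝ᵥ y) = x ⬝ᵥ y := by
  simpa [EuclideanSpace.inner_eq_star_dotProduct, dotProduct_comm] using
    b.sum_inner_mul_inner (WithLp.toLp 2 x) (WithLp.toLp 2 y)

variable [DecidableEq ι] {A : Matrix ι ι ℝ} (hA : A.IsHermitian)
include hA

theorem Matrix.IsHermitian.eigenvectorBasis_dotProduct_mulVec (j : ι) (x : ι → ℝ) :
    ⇑(hA.eigenvectorBasis j) ⬝ᵥ A *ᵥ x = hA.eigenvalues j * (⇑(hA.eigenvectorBasis j) ⬝ᵥ x) := by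
  rw [dotProduct_mulVec, ← mulVec_transpose, ← conjTranspose_eq_transpose_of_trivial, hA.eq,
    hA.mulVec_eigenvectorBasis, smul_dotProduct, smul_eq_mul]

theorem Matrix.IsHermitian.exists_eigenvalue_ge {x : ι → ℝ} (hx : x ≠ 0) {r : ℝ}
    (h : r * (x ⬝ᵥ x) ≤ x ⬝ᵥ A *ᵥ x) :
    ∃ j, ⇑(hA.eigenvectorBasis j) ⬝ᵥ x ≠ 0 ∧ r ≤ hA.eigenvalues j := by
  set b := hA.eigenvectorBasis
  set c : ι → ℝ := fun j => ⇑(b j) ⬝ᵥ x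
  by_contra! hlt
  have hterm : ∀ j, 0 ≤ (r - hA.eigenvalues j) * (c j * c j) := fun j => by
    by_cases hc : c j = 0
    · simp [hc]
    · exact mul_nonneg (sub_nonneg.mpr (hlt j hc).le) (mul_self_nonneg _)
  have hsum : ∑ j, (r - hA.eigenvalues j) * (c j * c j) = r * (x ⬝ᵥ x) - x ⬝ᵥ A *ᵥ x := by
    rw [← b.sum_dotProduct_mul_dotProduct, ← b.sum_dotProduct_mul_dotProduct x (A *ᵥ x),
      Finset.mul_sum, ← Finset.sum_sub_distrib]
    refine Finset.sum_congr rfl fun j _ => ?_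
    rw [hA.eigenvectorBasis_dotProduct_mulVec]
    ring
  obtain ⟨j, hj⟩ : ∃ j, c j ≠ 0 := by
    by_contra! hc
    apply hx
    rw [← dotProduct_self_eq_zero, ← b.sum_dotProduct_mul_dotProduct]
    simp [c, hc]
  have hpos : 0 < ∑ j, (r - hA.eigenvalues j) * (c j * c j) :=
    Finset.sum_pos' (fun j _ => hterm j)
      ⟨j, Finset.mem_univ j, mul_pos (sub_pos.mpr (hlt j hj)) (mul_self_pos.mpr hj)⟩
  linarith

end Rayleigh

namespace HanoiTowers

section EdgeEnergy

variable {ι : Type*} [Fintype ι]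

theorem dotProduct_self_nonneg (f : ι → ℝ) : 0 ≤ f ⬝ᵥ f :=
  Finset.sum_nonneg fun _ _ => mul_self_nonneg _

theorem sum_dotProduct_self_eq {a b c m : ι → ℝ} (hm : a + b + c = (3 : ℝ) • m) :
    a ⬝ᵥ a + b ⬝ᵥ b + c ⬝ᵥ c =
      3 * (m ⬝ᵥ m) + ((a - m) ⬝ᵥ (a - m) + (b - m) ⬝ᵥ (b - m) + (c - m) ⬝ᵥ (c - m)) := by
  simp only [dotProduct, Finset.mul_sum, ← Finset.sum_add_distrib]
  refine Finset.sum_congr rfl fun w _ => ?_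
  have hw := congrFun hm w
  simp only [Pi.add_apply, Pi.sub_apply, Pi.smul_apply, smul_eq_mul] at hw ⊢
  linear_combination 2 * m w * hw

theorem sum_dotProduct_sub_mean_eq {a b c m : ι → ℝ} (hm : a + b + c = (3 : ℝ) • m) :
    (a - m) ⬝ᵥ (a - m) + (b - m) ⬝ᵥ (b - m) + (c - m) ⬝ᵥ (c - m) =
      ((a - b) ⬝ᵥ (a - b) + (a - c) ⬝ᵥ (a - c) + (b - c) ⬝ᵥ (b - c)) / 3 := by
  simp only [dotProduct, Finset.sum_div, ← Finset.sum_add_distrib]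
  refine Finset.sum_congr rfl fun w _ => ?_
  have hw := congrFun hm w
  simp only [Pi.add_apply, Pi.sub_apply, Pi.smul_apply, smul_eq_mul] at hw ⊢
  linear_combination (a w + b w + c w - 3 * m w) / 3 * hw

variable (σ : Equiv.Perm ι)

def edgeEnergy (f : ι → ℝ) : ℝ := ∑ u, (f (σ u) - f u) ^ 2

theorem edgeEnergy_nonneg (f : ι → ℝ) : 0 ≤ edgeEnergy σ f :=
  Finset.sum_nonneg fun _ _ => sq_nonneg _

theorem edgeEnergy_eq (f : ι → ℝ) :
    edgeEnergy σ f = 2 * (f ⬝ᵥ f) - 2 * ∑ u, f u * f (σ u) := by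
  have hσ : ∑ u, f (σ u) * f (σ u) = f ⬝ᵥ f := Equiv.sum_comp σ fun u => f u * f u
  calc edgeEnergy σ f = ∑ u, (f (σ u) * f (σ u) + f u * f u - 2 * (f u * f (σ u))) :=
        Finset.sum_congr rfl fun u _ => by ring
    _ = 2 * (f ⬝ᵥ f) - 2 * ∑ u, f u * f (σ u) := by
        rw [Finset.sum_sub_distrib, Finset.sum_add_distrib, hσ, ← Finset.mul_sum, dotProduct]
        ring

theorem edgeEnergy_le (f g : ι → ℝ) :
    edgeEnergy σ f ≤ 2 * edgeEnergy σ g + 8 * ((g - f) ⬝ᵥ (g - f)) := by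
  have hσ : ∑ u, (g - f) (σ u) * (g - f) (σ u) = (g - f) ⬝ᵥ (g - f) :=
    Equiv.sum_comp σ fun u => (g - f) u * (g - f) u
  calc edgeEnergy σ f
      ≤ ∑ u, (2 * (g (σ u) - g u) ^ 2 +
          (4 * ((g - f) (σ u) * (g - f) (σ u)) + 4 * ((g - f) u * (g - f) u))) := by
        refine Finset.sum_le_sum fun u _ => ?_
        simp only [Pi.sub_apply]
        nlinarith [sq_nonneg (g (σ u) - g u + (g (σ u) - f (σ u)) - (g u - f u)),
          sq_nonneg (g (σ u) - f (σ u) + (g u - f u))]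
    _ = 2 * edgeEnergy σ g + 8 * ((g - f) ⬝ᵥ (g - f)) := by
        rw [Finset.sum_add_distrib, Finset.sum_add_distrib, ← Finset.mul_sum, ← Finset.mul_sum,
          ← Finset.mul_sum, hσ, edgeEnergy]
        simp only [dotProduct]
        ring

end EdgeEnergy

section Words

variable {k n : ℕ}

theorem ofFn_levelMove (i j : Fin k) (u : Fin n → Fin k) :
    List.ofFn (levelMove i j u) = hMove i j (List.ofFn u) :=
  List.ext_get (by simp [hMove_length]) fun m _ _ => by simp [levelMove]

theorem levelMove_involutive (i j : Fin k) :
    Function.Involutive (levelMove i j : (Fin n → Fin k) → Fin n → Fin k) := fun u =>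
  List.ofFn_injective (by simp only [ofFn_levelMove, hMove_involutive])

theorem levelMove_cons (i j x : Fin k) (w : Fin n → Fin k) :
    levelMove i j (Fin.cons x w) =
      if x = i then Fin.cons j w else if x = j then Fin.cons i w
      else Fin.cons x (levelMove i j w) := by
  apply List.ofFn_injective
  rw [ofFn_levelMove, List.ofFn_cons]
  split_ifs <;> simp_all [ofFn_levelMove, hMove]

def levelPerm (i j : Fin k) : Equiv.Perm (Fin n → Fin k) :=
  (levelMove_involutive i j).toPerm

@[simp] theorem levelPerm_apply (i j : Fin k) (u : Fin n → Fin k) :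
    levelPerm i j u = levelMove i j u := rfl

theorem sum_eq_sum_sum_cons {M : Type*} [AddCommMonoid M] (G : (Fin (n + 1) → Fin k) → M) :
    ∑ u, G u = ∑ x, ∑ w, G (Fin.cons x w) := by
  rw [← (Fin.consEquiv fun _ => Fin k).sum_comp, Fintype.sum_prod_type]
  rfl

def subtree (x : Fin k) (f : (Fin (n + 1) → Fin k) → ℝ) : (Fin n → Fin k) → ℝ :=
  fun w => f (Fin.cons x w)

theorem sum_eq_sum_subtree (f : (Fin (n + 1) → Fin k) → ℝ) :
    ∑ u, f u = ∑ x, ∑ w, subtree x f w :=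
  sum_eq_sum_sum_cons f

theorem dotProduct_self_eq_sum_subtree (f : (Fin (n + 1) → Fin k) → ℝ) :
    f ⬝ᵥ f = ∑ x, subtree x f ⬝ᵥ subtree x f :=
  sum_eq_sum_sum_cons _

theorem edgeEnergy_levelPerm_succ (i j : Fin k) (f : (Fin (n + 1) → Fin k) → ℝ) :
    edgeEnergy (levelPerm i j) f =
      ∑ x, if x = i ∨ x = j then (subtree i f - subtree j f) ⬝ᵥ (subtree i f - subtree j f)
        else edgeEnergy (levelPerm i j) (subtree x f) := by
  rw [edgeEnergy, sum_eq_sum_sum_cons]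
  refine Finset.sum_congr rfl fun x _ => ?_
  split_ifs with hx
  · refine Finset.sum_congr rfl fun w _ => ?_
    rcases hx with rfl | rfl <;> simp only [levelPerm_apply, levelMove_cons] <;> split_ifs <;>
      simp_all [subtree] <;> ring
  · push Not at hx
    simp [edgeEnergy, levelMove_cons, hx, subtree]

theorem adjMat_mulVec (f : (Fin n → Fin k) → ℝ) (u : Fin n → Fin k) :
    (adjMat k n *ᵥ f) u =
      ∑ p ∈ Finset.univ.filter (fun p : Fin k × Fin k => p.1 < p.2), f (levelMove p.1 p.2 u) := by
  classical
  simp only [mulVec, dotProduct, adjMat, of_apply, ← Finset.filter_filter, Finset.card_filter,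
    Nat.cast_sum, Nat.cast_ite, Nat.cast_one, Nat.cast_zero, Finset.sum_mul, ite_mul, one_mul,
    zero_mul]
  rw [Finset.sum_comm]
  refine Finset.sum_congr rfl fun p _ => ?_
  simp [(levelMove_involutive p.1 p.2).eq_iff]

theorem adjMat_isSymm : (adjMat k n).IsSymm := by
  ext u v
  simp only [transpose_apply, adjMat, of_apply]
  congr! 4 with p
  exact (levelMove_involutive p.1 p.2).eq_iff.trans eq_comm

end Words

noncomputable def markov (n : ℕ) : Matrix (Fin n → Fin 3) (Fin n → Fin 3) ℝ :=
  ((1 : ℝ) / 3) • adjMat 3 n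

theorem markov_isHermitian (n : ℕ) : (markov n).IsHermitian :=
  isHermitian_iff_isSymm.mpr (adjMat_isSymm.smul _)

variable {n : ℕ}

def energy (f : (Fin n → Fin 3) → ℝ) : ℝ :=
  edgeEnergy (levelPerm 0 1) f + edgeEnergy (levelPerm 0 2) f + edgeEnergy (levelPerm 1 2) f

theorem energy_nonneg (f : (Fin n → Fin 3) → ℝ) : 0 ≤ energy f :=
  add_nonneg (add_nonneg (edgeEnergy_nonneg _ f) (edgeEnergy_nonneg _ f)) (edgeEnergy_nonneg _ f)

theorem energy_succ (f : (Fin (n + 1) → Fin 3) → ℝ) :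
    energy f = 2 * ((subtree 0 f - subtree 1 f) ⬝ᵥ (subtree 0 f - subtree 1 f) +
        (subtree 0 f - subtree 2 f) ⬝ᵥ (subtree 0 f - subtree 2 f) +
        (subtree 1 f - subtree 2 f) ⬝ᵥ (subtree 1 f - subtree 2 f)) +
      (edgeEnergy (levelPerm 0 1) (subtree 2 f) + edgeEnergy (levelPerm 0 2) (subtree 1 f) +
        edgeEnergy (levelPerm 1 2) (subtree 0 f)) := by
  simp only [energy, edgeEnergy_levelPerm_succ, Fin.sum_univ_three, Fin.reduceEq, true_or,
    or_true, or_self, ↓reduceIte]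
  ring

noncomputable def subtreeMean (f : (Fin (n + 1) → Fin 3) → ℝ) : (Fin n → Fin 3) → ℝ :=
  (1 / 3 : ℝ) • (subtree 0 f + subtree 1 f + subtree 2 f)

theorem subtree_add_add_eq_smul_subtreeMean (f : (Fin (n + 1) → Fin 3) → ℝ) :
    subtree 0 f + subtree 1 f + subtree 2 f = (3 : ℝ) • subtreeMean f := by
  rw [subtreeMean, smul_smul]; norm_num

theorem sum_subtreeMean (f : (Fin (n + 1) → Fin 3) → ℝ) :
    ∑ w, subtreeMean f w = (∑ u, f u) / 3 := by
  simp only [subtreeMean, Pi.smul_apply, Pi.add_apply, smul_eq_mul, ← Finset.mul_sum,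
    Finset.sum_add_distrib, sum_eq_sum_subtree f, Fin.sum_univ_three]
  ring

theorem dotProduct_self_le_subtreeMean (f : (Fin (n + 1) → Fin 3) → ℝ) :
    f ⬝ᵥ f ≤ 3 * (subtreeMean f ⬝ᵥ subtreeMean f) + energy f / 6 := by
  have hm := subtree_add_add_eq_smul_subtreeMean f
  have := edgeEnergy_nonneg (levelPerm 0 1) (subtree 2 f)
  have := edgeEnergy_nonneg (levelPerm 0 2) (subtree 1 f)
  have := edgeEnergy_nonneg (levelPerm 1 2) (subtree 0 f)
  rw [dotProduct_self_eq_sum_subtree, Fin.sum_univ_three, sum_dotProduct_self_eq hm,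
    sum_dotProduct_sub_mean_eq hm, energy_succ]
  linarith

theorem energy_subtreeMean_le (f : (Fin (n + 1) → Fin 3) → ℝ) :
    energy (subtreeMean f) ≤ 2 * energy f := by
  have hm := subtree_add_add_eq_smul_subtreeMean f
  have hdev := sum_dotProduct_sub_mean_eq hm
  have := edgeEnergy_le (levelPerm 0 1) (subtreeMean f) (subtree 2 f)
  have := edgeEnergy_le (levelPerm 0 2) (subtreeMean f) (subtree 1 f)
  have := edgeEnergy_le (levelPerm 1 2) (subtreeMean f) (subtree 0 f)
  have := dotProduct_self_nonneg (subtree 0 f - subtree 1 f)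
  have := dotProduct_self_nonneg (subtree 0 f - subtree 2 f)
  have := dotProduct_self_nonneg (subtree 1 f - subtree 2 f)
  rw [energy_succ]
  unfold energy
  linarith

theorem three_mul_dotProduct_self_le_energy :
    ∀ {n : ℕ} (f : (Fin n → Fin 3) → ℝ), ∑ u, f u = 0 → 3 * (f ⬝ᵥ f) ≤ 7 ^ n * energy f
  | 0, f, hf => by
    have : f = 0 := funext fun u => by rwa [Fintype.sum_unique, Unique.default_eq u] at hf
    simp [this, energy, edgeEnergy]
  | n + 1, f, hf => by
    have ih := three_mul_dotProduct_self_le_energy (subtreeMean f)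
      (by rw [sum_subtreeMean, hf, zero_div])
    have hE := energy_nonneg f
    have h7 : (1 : ℝ) ≤ 7 ^ n := one_le_pow₀ (by norm_num)
    calc 3 * (f ⬝ᵥ f) ≤ 3 * (3 * (subtreeMean f ⬝ᵥ subtreeMean f)) + energy f / 2 := by
          linarith [dotProduct_self_le_subtreeMean f]
      _ ≤ 3 * (7 ^ n * (2 * energy f)) + 7 ^ n * energy f := by
          have hmean := mul_le_mul_of_nonneg_left (energy_subtreeMean_le f)
            (by positivity : (0 : ℝ) ≤ 7 ^ n)
          have hhalf := (half_le_self hE).trans (le_mul_of_one_le_left hE h7)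
          linarith
      _ = 7 ^ (n + 1) * energy f := by ring

theorem markov_mulVec_apply (f : (Fin n → Fin 3) → ℝ) (u : Fin n → Fin 3) :
    (markov n *ᵥ f) u = (f (levelPerm 0 1 u) + f (levelPerm 0 2 u) + f (levelPerm 1 2 u)) / 3 := by
  rw [markov, smul_mulVec, Pi.smul_apply, adjMat_mulVec, Finset.sum_filter,
    Fintype.sum_prod_type]
  simp only [Fin.sum_univ_three, Fin.reduceLT, not_lt_zero, lt_self_iff_false, ↓reduceIte,
    add_zero, zero_add, smul_eq_mul, levelPerm_apply]
  ring

theorem energy_eq (f : (Fin n → Fin 3) → ℝ) :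
    energy f = 6 * (f ⬝ᵥ f - f ⬝ᵥ markov n *ᵥ f) := by
  have hM : f ⬝ᵥ markov n *ᵥ f = (∑ u, f u * f (levelPerm 0 1 u) +
      ∑ u, f u * f (levelPerm 0 2 u) + ∑ u, f u * f (levelPerm 1 2 u)) / 3 := by
    simp only [dotProduct, markov_mulVec_apply, ← Finset.sum_add_distrib, Finset.sum_div]
    exact Finset.sum_congr rfl fun u _ => by ring
  rw [energy, edgeEnergy_eq, edgeEnergy_eq, edgeEnergy_eq, hM]
  ring

theorem sum_markov_mulVec (f : (Fin n → Fin 3) → ℝ) :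
    ∑ u, (markov n *ᵥ f) u = ∑ u, f u := by
  simp only [markov_mulVec_apply, ← Finset.sum_div, Finset.sum_add_distrib,
    Equiv.sum_comp (levelPerm _ _) f]
  ring

theorem markov_mulVec_const (c : ℝ) :
    markov n *ᵥ Function.const _ c = Function.const _ c := by
  ext u
  rw [markov_mulVec_apply]
  simp only [Function.const_apply]
  ring

theorem eigenvalue_le_of_sum_eq_zero {v : (Fin n → Fin 3) → ℝ} {μ : ℝ} (hv : v ≠ 0)
    (hμ : markov n *ᵥ v = μ • v) (hsum : ∑ u, v u = 0) : μ ≤ 1 - (1 / 7 : ℝ) ^ n / 2 := by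
  have hpos : 0 < v ⬝ᵥ v :=
    (dotProduct_self_nonneg v).lt_of_ne' (dotProduct_self_eq_zero.not.mpr hv)
  have hpoincare := three_mul_dotProduct_self_le_energy v hsum
  rw [energy_eq, hμ, dotProduct_smul, smul_eq_mul] at hpoincare
  have h3 : 3 ≤ 6 * 7 ^ n * (1 - μ) :=
    le_of_mul_le_mul_right (by linarith : 3 * (v ⬝ᵥ v) ≤ 6 * 7 ^ n * (1 - μ) * (v ⬝ᵥ v)) hpos
  have h7 : (1 / 7 : ℝ) ^ n * 7 ^ n = 1 := by rw [← mul_pow]; norm_num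
  have : (1 / 7 : ℝ) ^ n * 3 / 6 ≤ (1 / 7 : ℝ) ^ n * (6 * 7 ^ n * (1 - μ)) / 6 := by gcongr
  linear_combination this + (1 - μ) * h7

theorem sum_eq_zero_of_markov_mulVec_eq_smul {v : (Fin n → Fin 3) → ℝ} {μ : ℝ}
    (hμ : markov n *ᵥ v = μ • v) (hμ1 : μ ≠ 1) : ∑ u, v u = 0 := by
  have h := sum_markov_mulVec v
  rw [hμ] at h
  simp only [Pi.smul_apply, smul_eq_mul, ← Finset.mul_sum] at h
  have : (μ - 1) * ∑ u, v u = 0 := by linarith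
  exact (mul_eq_zero.mp this).resolve_left (sub_ne_zero.mpr hμ1)

theorem exists_eq_const_of_markov_mulVec_eq_self {v : (Fin n → Fin 3) → ℝ}
    (hv : markov n *ᵥ v = v) : ∃ c, v = Function.const _ c := by
  set c := (∑ u, v u) / 3 ^ n
  set w : (Fin n → Fin 3) → ℝ := v - Function.const _ c
  refine ⟨c, sub_eq_zero.mp ?_⟩
  by_contra hw
  have hμ : markov n *ᵥ w = (1 : ℝ) • w := by
    rw [mulVec_sub, hv, markov_mulVec_const, one_smul]
  have hsum : ∑ u, w u = 0 := by
    simp [w, c, Finset.sum_sub_distrib, mul_div_cancel₀]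
  have := eigenvalue_le_of_sum_eq_zero hw hμ hsum
  have : 0 < (1 / 7 : ℝ) ^ n := by positivity
  linarith

def lastLetterFun : (m : ℕ) → (Fin (m + 1) → Fin 3) → ℝ
  | 0 => fun u => ![1, -1, 0] (u 0)
  | m + 1 => fun u => lastLetterFun m (Fin.tail u)

theorem subtree_lastLetterFun (x : Fin 3) (m : ℕ) :
    subtree x (lastLetterFun (m + 1)) = lastLetterFun m := rfl

theorem subtree_lastLetterFun_zero (x : Fin 3) :
    subtree x (lastLetterFun 0) = Function.const _ (![1, -1, 0] x) := rfl

theorem sum_lastLetterFun (m : ℕ) : ∑ u, lastLetterFun m u = 0 := by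
  induction m with
  | zero => simp [sum_eq_sum_subtree, subtree_lastLetterFun_zero, Fin.sum_univ_three]
  | succ m ih => simp only [sum_eq_sum_subtree, subtree_lastLetterFun, ih, Finset.sum_const_zero]

theorem lastLetterFun_dotProduct_self (m : ℕ) :
    lastLetterFun m ⬝ᵥ lastLetterFun m = 2 * 3 ^ m := by
  induction m with
  | zero =>
    rw [dotProduct_self_eq_sum_subtree, Fin.sum_univ_three]
    norm_num [subtree_lastLetterFun_zero, dotProduct, cons_val_two, vecHead, vecTail]
  | succ m ih =>
    simp only [dotProduct_self_eq_sum_subtree, subtree_lastLetterFun, ih, Finset.sum_const,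
      Finset.card_univ, Fintype.card_fin]
    ring

theorem energy_lastLetterFun (m : ℕ) : energy (lastLetterFun m) = 12 := by
  induction m with
  | zero =>
    norm_num [energy_succ, subtree_lastLetterFun_zero, edgeEnergy, dotProduct, cons_val_two,
      vecHead, vecTail]
  | succ m ih =>
    rw [energy_succ, ← ih]
    simp only [subtree_lastLetterFun, sub_self, zero_dotProduct, energy]
    ring

theorem lastLetterFun_dotProduct_markov_mulVec (m : ℕ) :
    lastLetterFun m ⬝ᵥ markov (m + 1) *ᵥ lastLetterFun m =
      (1 - 3 * (1 / 3 : ℝ) ^ (m + 1)) * (lastLetterFun m ⬝ᵥ lastLetterFun m) := by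
  have h := energy_eq (lastLetterFun m)
  rw [energy_lastLetterFun, lastLetterFun_dotProduct_self] at h
  have h3 : (1 / 3 : ℝ) ^ m * 3 ^ m = 1 := by rw [← mul_pow]; norm_num
  rw [lastLetterFun_dotProduct_self]
  linear_combination (1 / 6 : ℝ) * h + 2 * h3

theorem le_of_mem_spectrum_markov {μ : ℝ} (hμ : μ ∈ spectrum ℝ (markov n))
    (hμ1 : μ ≠ 1) : μ ≤ 1 - (1 / 7 : ℝ) ^ n / 2 := by
  have hA := markov_isHermitian n
  obtain ⟨j, rfl⟩ : μ ∈ Set.range hA.eigenvalues := hA.spectrum_real_eq_range_eigenvalues ▸ hμ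
  have hv := hA.mulVec_eigenvectorBasis j
  exact eigenvalue_le_of_sum_eq_zero ((WithLp.ofLp_eq_zero 2).ne.mpr
    (hA.eigenvectorBasis.orthonormal.ne_zero j)) hv (sum_eq_zero_of_markov_mulVec_eq_smul hv hμ1)

theorem exists_mem_spectrum_markov_ge (m : ℕ) :
    ∃ μ ∈ spectrum ℝ (markov (m + 1)), μ ≠ 1 ∧ 1 - 3 * (1 / 3 : ℝ) ^ (m + 1) ≤ μ := by
  have hA := markov_isHermitian (m + 1)
  have hg : lastLetterFun m ≠ 0 := fun h => by
    have := lastLetterFun_dotProduct_self m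
    rw [h, zero_dotProduct] at this
    have : (0 : ℝ) < 2 * 3 ^ m := by positivity
    linarith
  obtain ⟨j, hj, hμ⟩ := hA.exists_eigenvalue_ge hg (lastLetterFun_dotProduct_markov_mulVec m).ge
  refine ⟨_, hA.eigenvalues_mem_spectrum_real j, fun h1 => hj ?_, hμ⟩
  have hv := hA.mulVec_eigenvectorBasis j
  rw [h1, one_smul] at hv
  obtain ⟨c, hc⟩ := exists_eq_const_of_markov_mulVec_eq_self hv
  simp only [hc, dotProduct, Function.const_apply, ← Finset.mul_sum, sum_lastLetterFun, mul_zero]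

end HanoiTowers

open HanoiTowers

/-- For `H(3)` the spectral gap `δ(n) = 1 - λ(n)` of the level-`n`
Schreier graph, where `λ(n)` is the largest eigenvalue different from `1` of the Markov
operator `M_n = (1/3)·T_n`, decays exponentially: there are `0 < c₁ ≤ c₂ < 1` and
`C₁, C₂ > 0` with `C₁·c₁ⁿ ≤ δ(n) ≤ C₂·c₂ⁿ` for all `n ≥ 1`. -/
theorem hanoi3_spectral_gap_exponential :
    letI M : ∀ n : ℕ, Matrix (Fin n → Fin 3) (Fin n → Fin 3) ℝ :=
      fun n => ((1 : ℝ) / 3) • adjMat 3 n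
    letI δ : ℕ → ℝ := fun n => 1 - sSup (spectrum ℝ (M n) \ {1})
    ∃ c₁ c₂ C₁ C₂ : ℝ, 0 < c₁ ∧ c₁ ≤ c₂ ∧ c₂ < 1 ∧ 0 < C₁ ∧ 0 < C₂ ∧
      ∀ n : ℕ, 1 ≤ n → C₁ * c₁ ^ n ≤ δ n ∧ δ n ≤ C₂ * c₂ ^ n := by
  refine ⟨1 / 7, 1 / 3, 1 / 2, 3, by norm_num, by norm_num, by norm_num, by norm_num, by norm_num,
    fun n hn => ?_⟩
  obtain ⟨m, rfl⟩ := Nat.exists_eq_add_of_le' hn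
  change 1 / 2 * (1 / 7) ^ (m + 1) ≤ 1 - sSup (spectrum ℝ (markov (m + 1)) \ {1}) ∧
    1 - sSup (spectrum ℝ (markov (m + 1)) \ {1}) ≤ 3 * (1 / 3) ^ (m + 1)
  set S := spectrum ℝ (markov (m + 1)) \ {1}
  have hub : ∀ μ ∈ S, μ ≤ 1 - (1 / 7 : ℝ) ^ (m + 1) / 2 :=
    fun μ hμ => le_of_mem_spectrum_markov hμ.1 hμ.2
  obtain ⟨μ, hμ, hμ1, hμge⟩ := exists_mem_spectrum_markov_ge m
  have hsup_le : sSup S ≤ _ := csSup_le ⟨μ, hμ, hμ1⟩ hub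
  have hle_sup : μ ≤ sSup S := le_csSup ⟨_, hub⟩ ⟨hμ, hμ1⟩
  constructor <;> linarith
end
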